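/- For all real T, the limit as p tends to 1 from below of the infimum over q in [0,1] of D_bin(q‖p) + q·T equals T, where D_bin(q‖p) = q·log2(q/p) + (1−q)·log2((1−q)/(1−p)) is the binary relative entropy (with the conventions 0·log 0 = 0). -/

import Mathlib

/-!
Gibbs' variational principle computes the infimum exactly: for `0 < p < 1`,
`inf_q (D_bin(q‖p) + q·T) = -log₂ (p·2^(-T) + (1 - p))`. The lower bound is
`E_q[log₂ c] ≤ D_bin(q‖p)` for every positive `c` with `E_p[c] = 1`, applied to the density
`c = (2^(-T), 1) / (p·2^(-T) + 1 - p)`, and it is attained at the tilted distribution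
`q = p·2^(-T) / (p·2^(-T) + 1 - p)`. The right-hand side is continuous at `p = 1`,
where it equals `T`.
-/

open Filter Set

/-- Binary relative entropy (base 2), with the convention `0 · log 0 = 0`
(automatic since `Real.log 0 = 0`). -/
noncomputable def Dbin (q p : ℝ) : ℝ :=
  q * Real.logb 2 (q / p) + (1 - q) * Real.logb 2 ((1 - q) / (1 - p))

open Real

lemma mul_log_le_mul_log_div_add {q c x : ℝ} (hq : 0 ≤ q) (hc : 0 < c) (hx : 0 < x) :
    q * log c ≤ q * log (q / x) + (c * x - q) := by
  rcases hq.eq_or_lt with rfl | hq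
  · simp only [zero_mul, zero_add, sub_zero]; positivity
  · have key := log_le_sub_one_of_pos (show 0 < c * x / q by positivity)
    rw [log_div (by positivity) hq.ne', log_mul hc.ne' hx.ne'] at key
    rw [log_div hq.ne' hx.ne']
    have hq' : q * (c * x / q - 1) = c * x - q := by field_simp
    linarith [mul_le_mul_of_nonneg_left key hq.le]

lemma mul_logb_add_mul_logb_le_Dbin {p q c₁ c₂ : ℝ} (hp₀ : 0 < p) (hp₁ : p < 1)
    (hc₁ : 0 < c₁) (hc₂ : 0 < c₂) (hc : c₁ * p + c₂ * (1 - p) = 1)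
    (hq₀ : 0 ≤ q) (hq₁ : q ≤ 1) :
    q * logb 2 c₁ + (1 - q) * logb 2 c₂ ≤ Dbin q p := by
  have h₁ := mul_log_le_mul_log_div_add hq₀ hc₁ hp₀
  have h₂ := mul_log_le_mul_log_div_add (sub_nonneg.2 hq₁) hc₂ (sub_pos.2 hp₁)
  simp only [Dbin, logb, ← mul_div_assoc, ← add_div]
  exact div_le_div_of_nonneg_right (by linarith) (log_nonneg one_le_two)

theorem isLeast_Dbin_add_mul {p : ℝ} (hp₀ : 0 < p) (hp₁ : p < 1) (T : ℝ) :
    IsLeast (range fun q : Icc (0 : ℝ) 1 => Dbin q p + q * T)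
      (-logb 2 (p * 2 ^ (-T) + (1 - p))) := by
  set Z := p * (2 : ℝ) ^ (-T) + (1 - p)
  have hw : 0 < (2 : ℝ) ^ (-T) := by positivity
  have hZ₀ : 0 < Z := add_pos (by positivity) (sub_pos.2 hp₁)
  have hc₁ : 0 < 2 ^ (-T) / Z := by positivity
  have hc₂ : 0 < 1 / Z := by positivity
  have hc : 2 ^ (-T) / Z * p + 1 / Z * (1 - p) = 1 := by field_simp; ring
  have hlog₁ : logb 2 (2 ^ (-T) / Z) = -T - logb 2 Z := by
    rw [logb_div hw.ne' hZ₀.ne', logb_rpow two_pos (by norm_num)]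
  have hlog₂ : logb 2 (1 / Z) = -logb 2 Z := by rw [one_div, logb_inv]
  refine ⟨⟨⟨2 ^ (-T) / Z * p, by positivity, ?_⟩, ?_⟩, ?_⟩
  · linarith [mul_pos hc₂ (sub_pos.2 hp₁)]
  · have hq₂ : (1 - 2 ^ (-T) / Z * p) / (1 - p) = 1 / Z := by
      rw [show 1 - 2 ^ (-T) / Z * p = 1 / Z * (1 - p) by linarith,
        mul_div_cancel_right₀ _ (sub_pos.2 hp₁).ne']
    simp only [Dbin, mul_div_cancel_right₀ _ hp₀.ne', hq₂, hlog₁, hlog₂]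
    ring
  · rintro _ ⟨⟨q, hq₀, hq₁⟩, rfl⟩
    have := mul_logb_add_mul_logb_le_Dbin hp₀ hp₁ hc₁ hc₂ hc hq₀ hq₁
    rw [hlog₁, hlog₂] at this
    dsimp only
    linarith

/-- For all real `T`, the limit as `p → 1⁻` of `inf_{q ∈ [0,1]} (D_bin(q‖p) + q·T)` equals `T`. -/
theorem limit_inf_Dbin_add_linear (T : ℝ) :
    Tendsto (fun p : ℝ => ⨅ q : Set.Icc (0:ℝ) 1, (Dbin q p + (q : ℝ) * T))
      (nhdsWithin 1 (Set.Iio 1)) (nhds T) := by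
  have hvalue : -logb 2 (1 * 2 ^ (-T) + (1 - 1)) = T := by
    rw [one_mul, sub_self, add_zero, logb_rpow two_pos (by norm_num), neg_neg]
  have hcont : ContinuousAt (fun p : ℝ => -logb 2 (p * 2 ^ (-T) + (1 - p))) 1 := by
    refine (ContinuousAt.logb (by fun_prop) ?_).neg
    simp only [one_mul, sub_self, add_zero]; positivity
  refine ((hvalue ▸ hcont.tendsto).mono_left nhdsWithin_le_nhds).congr' ?_
  filter_upwards [Ioo_mem_nhdsLT one_pos] with p hp
  exact ((isLeast_Dbin_add_mul hp.1 hp.2 T).csInf_eq).symm
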